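/- arXiv:0812.4713 — 5 statements merged into one kernel-verified Lean document; each statement's English description precedes it below -/
import Mathlib

section
/- Let M be a topological space that is the union of a directed family (M_α)_{α∈A} of subspaces, with all inclusion maps M_α → M and M_α → M_β (for α ≤ β) continuous. If M is compactly retractive (every compact K ⊆ M is contained in some M_α with M_α inducing the same topology on K), then for every p ∈ M, the path component of p in M equals the union over all α with p ∈ M_α of the path components of p in M_α. -/
open Set

/-- For a compactly retractive directed union `M = ⋃ α, M_α` of topological
spaces (with continuous inclusion maps), the path component of a point `p` in
`M` is the union of the path components of `p` in the steps `M_α` containing it. -/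
theorem pathComponent_of_compactly_retractive_union
    {M : Type*} [TopologicalSpace M] {A : Type*} [Preorder A] [IsDirected A (· ≤ ·)]
    (S : A → Set M) (hmono : Monotone S) (hunion : ⋃ a, S a = univ)
    (τ : ∀ a, TopologicalSpace (S a))
    (hincl : ∀ a, @Continuous _ _ (τ a) _ (fun x : S a => (x : M)))
    (hinclab : ∀ a b (hab : a ≤ b), @Continuous _ _ (τ a) (τ b) (Set.inclusion (hmono hab)))
    (hcr : ∀ K : Set M, IsCompact K → ∃ a, ∃ hKa : K ⊆ S a,
      (inferInstance : TopologicalSpace K) =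
        TopologicalSpace.induced (Set.inclusion hKa) (τ a))
    (p : M) :
    pathComponent p =
      ⋃ a, ⋃ (ha : p ∈ S a),
        (fun x : S a => (x : M)) '' (@pathComponent _ (τ a) ⟨p, ha⟩) := by
  ext q
  simp only [mem_iUnion, mem_image, mem_pathComponent_iff]
  constructor
  · intro hq
    obtain ⟨γ⟩ := hq
    have hKcomp : IsCompact (Set.range γ) := isCompact_range γ.continuous
    obtain ⟨a, hKa, htop⟩ := hcr (Set.range γ) hKcomp
    have hpa : p ∈ S a := hKa ⟨0, γ.source⟩
    have hqa : q ∈ S a := hKa ⟨1, γ.target⟩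
    -- the factored map I → range γ is continuous
    have h1 : Continuous (fun t : unitInterval => (⟨γ t, Set.mem_range_self t⟩ :
        Set.range γ)) := Continuous.subtype_mk γ.continuous _
    have h2 : @Continuous (Set.range γ) (S a) _ (τ a) (Set.inclusion hKa) := by
      have h := @continuous_induced_dom (Set.range γ) (S a) (Set.inclusion hKa) (τ a)
      rwa [← htop] at h
    have hf : @Continuous unitInterval (S a) _ (τ a)
        (fun t => Set.inclusion hKa ⟨γ t, Set.mem_range_self t⟩) := h2.comp h1
    refine ⟨a, hpa, ⟨q, hqa⟩, ⟨?_⟩, rfl⟩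
    exact { toFun := fun t => Set.inclusion hKa ⟨γ t, Set.mem_range_self t⟩
            continuous_toFun := hf
            source' := by apply Subtype.ext; simpa using γ.source
            target' := by apply Subtype.ext; simpa using γ.target }
  · rintro ⟨a, ha, x, hx, rfl⟩
    obtain ⟨γ⟩ := hx
    exact ⟨@Path.map (S a) M (τ a) _ _ _ γ _ (hincl a)⟩
end

section
/- Let M be a topological space that is the compactly retractive union of a directed family (M_α)_{α∈A} of subspaces with continuous inclusion maps, and let p ∈ M with A_p := {α ∈ A : p ∈ M_α}. Then for each k ≥ 1, the canonical homomorphism from the direct limit of the homotopy groups π_k(M_α, p), α ∈ A_p, to π_k(M, p) (induced by the inclusion maps) is an isomorphism of groups. -/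
/-!
A generalized loop `I^k → M` and a homotopy `I × I^k → M` between two of them have compact
domains, so their images lie in a single step `M_α` whose topology induces that of the image;
hence they factor continuously through `M_α`. Because the inclusion `M_α → M` is injective, the
factored maps are again a loop and a homotopy rel boundary, and directedness moves everything
into a common step.
-/

open Set Topology.Homotopy

/-- The map on homotopy groups induced by a continuous pointed map. -/
noncomputable def homotopyGroupMap {X Y : Type*} [TopologicalSpace X] [TopologicalSpace Y]
    (N : Type*) (f : C(X, Y)) (x : X) :
    HomotopyGroup N X x → HomotopyGroup N Y (f x) :=
  Quotient.map
    (fun g => (⟨f.comp g.1, fun z hz => by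
        simp only [ContinuousMap.comp_apply, g.2 z hz]⟩ : GenLoop N Y (f x)))
    (fun g₁ g₂ h => Nonempty.map (fun H => H.compContinuousMap f) h)

open Function unitInterval Topology

def IsCompactlyRetractive {M A : Type*} [TopologicalSpace M] (S : A → Set M)
    (τ : ∀ a, TopologicalSpace (S a)) : Prop :=
  ∀ K : Set M, IsCompact K → ∃ a, ∃ hKa : K ⊆ S a,
    (inferInstance : TopologicalSpace K) = TopologicalSpace.induced (Set.inclusion hKa) (τ a)

theorem IsCompactlyRetractive.exists_lift {M A : Type*} [TopologicalSpace M] {S : A → Set M}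
    {τ : ∀ a, TopologicalSpace (S a)} (hS : IsCompactlyRetractive S τ)
    {X : Type*} [TopologicalSpace X] [CompactSpace X] (f : C(X, M)) :
    ∃ a, ∃ g : @ContinuousMap X (S a) _ (τ a), ∀ x, (g x : M) = f x := by
  obtain ⟨a, hfa, htop⟩ := hS (range f) (isCompact_range f.continuous)
  have hincl : Continuous[_, τ a] (Set.inclusion hfa) :=
    continuous_iff_le_induced.mpr htop.le
  exact ⟨a, @ContinuousMap.mk _ _ _ (τ a) _ (hincl.comp f.continuous.rangeFactorization),
    fun _ => rfl⟩

theorem ContinuousMap.HomotopicRel.of_comp_of_lift {Z X Y : Type*} [TopologicalSpace Z]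
    [TopologicalSpace X] [TopologicalSpace Y] {j : C(Y, X)} (hj : Injective j)
    {f₀ f₁ : C(Z, Y)} {S : Set Z} (H : (j.comp f₀).HomotopyRel (j.comp f₁) S)
    (H' : C(I × Z, Y)) (hH' : ∀ z, j (H' z) = H z) : f₀.HomotopicRel f₁ S :=
  ⟨{ toContinuousMap := H'
     map_zero_left := fun z => hj ((hH' _).trans (H.apply_zero z))
     map_one_left := fun z => hj ((hH' _).trans (H.apply_one z))
     prop' := fun t z hz => hj ((hH' _).trans (H.prop t z hz)) }⟩

theorem GenLoop.exists_homotopyGroupMap_eq_of_lift {N X Y : Type*} [TopologicalSpace X]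
    [TopologicalSpace Y] {j : C(Y, X)} (hj : Injective j) {y : Y} (γ : Ω^ N X (j y))
    (g : C(I^N, Y)) (hg : ∀ z, j (g z) = γ z) :
    ∃ h : HomotopyGroup N Y y, homotopyGroupMap N j y h = ⟦γ⟧ :=
  ⟨⟦⟨g, fun z hz => hj ((hg z).trans (γ.2 z hz))⟩⟧,
    congrArg _ (Subtype.ext (ContinuousMap.ext hg))⟩

theorem homotopyGroup_of_compactly_retractive_union_general
    {M : Type*} [TopologicalSpace M] {A : Type*} [Preorder A] [IsDirected A (· ≤ ·)]
    (S : A → Set M) (hmono : Monotone S)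
    (τ : ∀ a, TopologicalSpace (S a))
    (hincl : ∀ a, @Continuous _ _ (τ a) _ (fun x : S a => (x : M)))
    (hinclab : ∀ a b (hab : a ≤ b), @Continuous _ _ (τ a) (τ b) (Set.inclusion (hmono hab)))
    (hcr : ∀ K : Set M, IsCompact K → ∃ a, ∃ hKa : K ⊆ S a,
      (inferInstance : TopologicalSpace K) =
        TopologicalSpace.induced (Set.inclusion hKa) (τ a))
    (p : M) (n : ℕ) :
    (∀ g : HomotopyGroup (Fin (n + 1)) M p, ∃ a, ∃ ha : p ∈ S a,
      ∃ h : @HomotopyGroup (Fin (n + 1)) (S a) (τ a) ⟨p, ha⟩,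
        @homotopyGroupMap _ _ (τ a) _ (Fin (n + 1))
          (@ContinuousMap.mk _ _ (τ a) _ (fun x : S a => (x : M)) (hincl a)) ⟨p, ha⟩ h = g) ∧
    (∀ a b, ∀ ha : p ∈ S a, ∀ hb : p ∈ S b,
      ∀ x : @HomotopyGroup (Fin (n + 1)) (S a) (τ a) ⟨p, ha⟩,
      ∀ y : @HomotopyGroup (Fin (n + 1)) (S b) (τ b) ⟨p, hb⟩,
      @homotopyGroupMap _ _ (τ a) _ (Fin (n + 1))
          (@ContinuousMap.mk _ _ (τ a) _ (fun x : S a => (x : M)) (hincl a)) ⟨p, ha⟩ x =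
        @homotopyGroupMap _ _ (τ b) _ (Fin (n + 1))
          (@ContinuousMap.mk _ _ (τ b) _ (fun x : S b => (x : M)) (hincl b)) ⟨p, hb⟩ y →
      ∃ c, ∃ hac : a ≤ c, ∃ hbc : b ≤ c,
        @homotopyGroupMap _ _ (τ a) (τ c) (Fin (n + 1))
            (@ContinuousMap.mk _ _ (τ a) (τ c) (Set.inclusion (hmono hac)) (hinclab a c hac))
            ⟨p, ha⟩ x =
          @homotopyGroupMap _ _ (τ b) (τ c) (Fin (n + 1))
            (@ContinuousMap.mk _ _ (τ b) (τ c) (Set.inclusion (hmono hbc)) (hinclab b c hbc))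
            ⟨p, hb⟩ y) := by
  have hS : IsCompactlyRetractive S τ := hcr
  refine ⟨fun g => ?_, fun a b ha hb x y hxy => ?_⟩
  · induction g using Quotient.inductionOn with | h γ => ?_
    obtain ⟨a, g, hg⟩ := hS.exists_lift γ.1
    have ha : p ∈ S a := by
      have hcorner : (fun _ => 0 : I^(Fin (n + 1))) ∈ Cube.boundary (Fin (n + 1)) :=
        ⟨0, Or.inl rfl⟩
      simpa only [hg, γ.2 _ hcorner] using (g fun _ => 0).2
    exact ⟨a, ha, GenLoop.exists_homotopyGroupMap_eq_of_lift (j := ⟨_, hincl a⟩)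
      (y := ⟨p, ha⟩) Subtype.val_injective γ g hg⟩
  · induction x, y using Quotient.inductionOn₂ with | h γa γb => ?_
    obtain ⟨H⟩ := Quotient.exact hxy
    obtain ⟨c', H', hH'⟩ := hS.exists_lift H.toContinuousMap
    obtain ⟨d, had, hbd⟩ := directed_of (· ≤ ·) a b
    obtain ⟨c, hdc, hc'c⟩ := directed_of (· ≤ ·) d c'
    refine ⟨c, had.trans hdc, hbd.trans hdc, Quotient.sound ?_⟩
    exact ContinuousMap.HomotopicRel.of_comp_of_lift (j := ⟨_, hincl c⟩) Subtype.val_injective H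
      ⟨_, (hinclab c' c hc'c).comp H'.continuous⟩ hH'

/-- For a compactly retractive directed union `M = ⋃ α, M_α` of topological
spaces (with continuous inclusion maps), and `p ∈ M`, `k = n + 1 ≥ 1`, the
canonical homomorphism from the direct limit of the groups `π_k(M_α, p)` (over
those `α` with `p ∈ M_α`) to `π_k(M, p)` is an isomorphism: every element of
`π_k(M, p)` comes from some step, and two elements of steps that become equal in
`π_k(M, p)` already become equal in some common later step. -/
theorem homotopyGroup_of_compactly_retractive_union
    {M : Type*} [TopologicalSpace M] {A : Type*} [Preorder A] [IsDirected A (· ≤ ·)]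
    (S : A → Set M) (hmono : Monotone S) (hunion : ⋃ a, S a = univ)
    (τ : ∀ a, TopologicalSpace (S a))
    (hincl : ∀ a, @Continuous _ _ (τ a) _ (fun x : S a => (x : M)))
    (hinclab : ∀ a b (hab : a ≤ b), @Continuous _ _ (τ a) (τ b) (Set.inclusion (hmono hab)))
    (hcr : ∀ K : Set M, IsCompact K → ∃ a, ∃ hKa : K ⊆ S a,
      (inferInstance : TopologicalSpace K) =
        TopologicalSpace.induced (Set.inclusion hKa) (τ a))
    (p : M) (n : ℕ) :
    (∀ g : HomotopyGroup (Fin (n + 1)) M p, ∃ a, ∃ ha : p ∈ S a,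
      ∃ h : @HomotopyGroup (Fin (n + 1)) (S a) (τ a) ⟨p, ha⟩,
        @homotopyGroupMap _ _ (τ a) _ (Fin (n + 1))
          (@ContinuousMap.mk _ _ (τ a) _ (fun x : S a => (x : M)) (hincl a)) ⟨p, ha⟩ h = g) ∧
    (∀ a b, ∀ ha : p ∈ S a, ∀ hb : p ∈ S b,
      ∀ x : @HomotopyGroup (Fin (n + 1)) (S a) (τ a) ⟨p, ha⟩,
      ∀ y : @HomotopyGroup (Fin (n + 1)) (S b) (τ b) ⟨p, hb⟩,
      @homotopyGroupMap _ _ (τ a) _ (Fin (n + 1))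
          (@ContinuousMap.mk _ _ (τ a) _ (fun x : S a => (x : M)) (hincl a)) ⟨p, ha⟩ x =
        @homotopyGroupMap _ _ (τ b) _ (Fin (n + 1))
          (@ContinuousMap.mk _ _ (τ b) _ (fun x : S b => (x : M)) (hincl b)) ⟨p, hb⟩ y →
      ∃ c, ∃ hac : a ≤ c, ∃ hbc : b ≤ c,
        @homotopyGroupMap _ _ (τ a) (τ c) (Fin (n + 1))
            (@ContinuousMap.mk _ _ (τ a) (τ c) (Set.inclusion (hmono hac)) (hinclab a c hac))
            ⟨p, ha⟩ x =
          @homotopyGroupMap _ _ (τ b) (τ c) (Fin (n + 1))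
            (@ContinuousMap.mk _ _ (τ b) (τ c) (Set.inclusion (hmono hbc)) (hinclab b c hbc))
            ⟨p, hb⟩ y) :=
  homotopyGroup_of_compactly_retractive_union_general S hmono τ hincl hinclab hcr p n
end

section
/- Let M be a topological space that is the compactly retractive union of a directed family (M_α)_{α∈A} of subspaces with continuous inclusion maps, and let p ∈ M with A_p := {α ∈ A : p ∈ M_α}. Then the canonical map from the direct limit (colimit of sets) of the path-component sets π₀(M_α) over A_p to π₀(M) is a bijection. -/
open Set

/-- The map on sets of path components induced by a continuous map. -/
def zerothHomotopyMap {X Y : Type*} [TopologicalSpace X] [TopologicalSpace Y]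
    (f : C(X, Y)) : ZerothHomotopy X → ZerothHomotopy Y :=
  Quotient.map f (fun _ _ h => Nonempty.map (fun γ => γ.map f.continuous) h)

/-- For a compactly retractive directed union `M = ⋃ α, M_α` of topological
spaces (with continuous inclusion maps) and `p ∈ M`, the canonical map from the
direct limit (colimit of sets) of the path-component sets `π₀(M_α)`, over those
`α` with `p ∈ M_α`, to `π₀(M)` is a bijection: it is surjective, and two classes
from steps that agree in `π₀(M)` already agree in some common later step. -/
theorem zerothHomotopy_of_compactly_retractive_union
    {M : Type*} [TopologicalSpace M] {A : Type*} [Preorder A] [IsDirected A (· ≤ ·)]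
    (S : A → Set M) (hmono : Monotone S) (hunion : ⋃ a, S a = univ)
    (τ : ∀ a, TopologicalSpace (S a))
    (hincl : ∀ a, @Continuous _ _ (τ a) _ (fun x : S a => (x : M)))
    (hinclab : ∀ a b (hab : a ≤ b), @Continuous _ _ (τ a) (τ b) (Set.inclusion (hmono hab)))
    (hcr : ∀ K : Set M, IsCompact K → ∃ a, ∃ hKa : K ⊆ S a,
      (inferInstance : TopologicalSpace K) =
        TopologicalSpace.induced (Set.inclusion hKa) (τ a))
    (p : M) (hp : ∃ a, p ∈ S a) :
    (∀ g : ZerothHomotopy M, ∃ a, ∃ _ : p ∈ S a,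
      ∃ h : @ZerothHomotopy (S a) (τ a),
        @zerothHomotopyMap _ _ (τ a) _
          (@ContinuousMap.mk _ _ (τ a) _ (fun x : S a => (x : M)) (hincl a)) h = g) ∧
    (∀ a b, ∀ _ : p ∈ S a, ∀ _ : p ∈ S b,
      ∀ x : @ZerothHomotopy (S a) (τ a), ∀ y : @ZerothHomotopy (S b) (τ b),
      @zerothHomotopyMap _ _ (τ a) _
          (@ContinuousMap.mk _ _ (τ a) _ (fun x : S a => (x : M)) (hincl a)) x =
        @zerothHomotopyMap _ _ (τ b) _
          (@ContinuousMap.mk _ _ (τ b) _ (fun x : S b => (x : M)) (hincl b)) y →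
      ∃ c, ∃ hac : a ≤ c, ∃ hbc : b ≤ c,
        @zerothHomotopyMap _ _ (τ a) (τ c)
            (@ContinuousMap.mk _ _ (τ a) (τ c) (Set.inclusion (hmono hac)) (hinclab a c hac)) x =
          @zerothHomotopyMap _ _ (τ b) (τ c)
            (@ContinuousMap.mk _ _ (τ b) (τ c) (Set.inclusion (hmono hbc)) (hinclab b c hbc)) y) := by
  constructor
  · intro g
    obtain ⟨m, rfl⟩ := Quotient.exists_rep g
    have hm : m ∈ ⋃ a, S a := hunion ▸ mem_univ m
    obtain ⟨a, hma⟩ := mem_iUnion.mp hm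
    obtain ⟨b, hpb⟩ := hp
    obtain ⟨c, hac, hbc⟩ := directed_of (· ≤ ·) a b
    letI := τ c
    exact ⟨c, hmono hbc hpb, Quotient.mk _ (⟨m, hmono hac hma⟩ : S c), rfl⟩
  · intro a b hpa hpb x y hxy
    letI := τ a; letI := τ b
    obtain ⟨x₀, rfl⟩ := Quotient.exists_rep x
    obtain ⟨y₀, rfl⟩ := Quotient.exists_rep y
    have hj : Joined (x₀ : M) (y₀ : M) := Quotient.exact hxy
    obtain ⟨γ⟩ := hj
    obtain ⟨d, hKd, htop⟩ := hcr (Set.range γ) (isCompact_range γ.continuous)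
    obtain ⟨c₀, hac₀, hdc₀⟩ := directed_of (· ≤ ·) a d
    obtain ⟨c, hc₀c, hbc⟩ := directed_of (· ≤ ·) c₀ b
    letI := τ c; letI := τ d
    have hac : a ≤ c := le_trans hac₀ hc₀c
    have hdc : d ≤ c := le_trans hdc₀ hc₀c
    refine ⟨c, hac, hbc, ?_⟩
    -- path in range γ
    have hKcont : Continuous (Set.inclusion hKd : Set.range γ → S d) := by
      rw [continuous_iff_le_induced, ← htop]
    let γK : Path (⟨γ 0, mem_range_self 0⟩ : Set.range γ) ⟨γ 1, mem_range_self 1⟩ :=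
      { toFun := fun t => ⟨γ t, mem_range_self t⟩
        continuous_toFun := γ.continuous.subtype_mk _
        source' := rfl
        target' := rfl }
    have hjc : Joined (Set.inclusion (hmono hac) x₀) (Set.inclusion (hmono hbc) y₀) := by
      refine ⟨((γK.map hKcont).map (hinclab d c hdc)).cast ?_ ?_⟩
      · exact Subtype.ext (by simp [γ.source])
      · exact Subtype.ext (by simp [γ.target])
    exact Quotient.sound hjc
end

section
/- Let M be a topological space that is the compactly retractive union of a directed family (M_α)_{α∈A} of subspaces with continuous inclusion maps. Then for every k ∈ ℕ₀ and every commutative ring R, the singular homology module H_k(M; R) is the direct limit of the modules H_k(M_α; R), via the inclusion-induced maps. -/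
/-!
A singular chain involves finitely many simplices, whose images form a compact subset of `M`;
by compact retractivity it is therefore a chain of some `M_α`, and the chain maps induced by the
inclusions are injective. So the singular chain complex of `M` is the directed union of those of
the `M_α`, and homology of modules commutes with directed unions: a cycle of `M` is a cycle of
some `M_α`, and a boundary relation in `M`, which involves one more chain, already holds in some
later `M_γ`.
-/

open Set CategoryTheory

noncomputable def singularHomologyFunctor (R : Type) [CommRing R] (k : ℕ) :
    TopCat.{0} ⥤ ModuleCat.{0} R :=
  TopCat.toSSet ⋙ ((SimplicialObject.whiskering _ _).obj (ModuleCat.free R)) ⋙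
    AlgebraicTopology.alternatingFaceMapComplex _ ⋙
    HomologicalComplex.homologyFunctor _ _ k

open Limits Simplicial

universe u v

namespace HomologicalComplex

variable {R : Type u} [Ring R] {ι : Type*} {c : ComplexShape ι}
  {K L : HomologicalComplex (ModuleCat.{v} R) c}

lemma homologyπ_surjective (K : HomologicalComplex (ModuleCat.{v} R) c) (i : ι) :
    Function.Surjective (K.homologyπ i) :=
  (ModuleCat.epi_iff_surjective _).1 inferInstance

lemma iCycles_injective (K : HomologicalComplex (ModuleCat.{v} R) c) (i : ι) :
    Function.Injective (K.iCycles i) :=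
  (ModuleCat.mono_iff_injective _).1 inferInstance

lemma exists_iCycles_eq {i : ι} (y : K.X i) (hy : K.d i (c.next i) y = 0) :
    ∃ x : K.cycles i, K.iCycles i x = y :=
  ⟨(K.sc i).moduleCatCyclesIso.inv ⟨y, hy⟩,
    (K.sc i).moduleCatCyclesIso_inv_iCycles_apply ⟨y, hy⟩⟩

lemma homologyπ_eq_zero_iff {j : ι} (x : K.cycles j) :
    K.homologyπ j x = 0 ↔ ∃ w : K.X (c.prev j), K.d (c.prev j) j w = K.iCycles j x := by
  have hexact : (ShortComplex.mk _ _ (K.toCycles_comp_homologyπ (c.prev j) j)).Exact :=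
    ShortComplex.exact_of_g_is_cokernel _ (K.homologyIsCokernel (c.prev j) j rfl)
  have hd : ∀ w, K.iCycles j (K.toCycles (c.prev j) j w) = K.d (c.prev j) j w := fun w =>
    ConcreteCategory.congr_hom (K.toCycles_i (c.prev j) j) w
  constructor
  · intro hx
    obtain ⟨w, hw⟩ := (ShortComplex.moduleCat_exact_iff _).1 hexact x hx
    exact ⟨w, by rw [← hd]; exact congrArg _ hw⟩
  · rintro ⟨w, hw⟩
    rw [← hd] at hw
    rw [← iCycles_injective K j hw]
    exact ConcreteCategory.congr_hom (K.toCycles_comp_homologyπ (c.prev j) j) w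

lemma Hom.comm_apply (φ : K ⟶ L) (i j : ι) (x : K.X i) :
    L.d i j (φ.f i x) = φ.f j (K.d i j x) :=
  ConcreteCategory.congr_hom (φ.comm i j) x

lemma cyclesMap_i_apply (φ : K ⟶ L) (i : ι) (x : K.cycles i) :
    L.iCycles i (cyclesMap φ i x) = φ.f i (K.iCycles i x) :=
  ConcreteCategory.congr_hom (cyclesMap_i φ i) x

lemma homologyMap_homologyπ_apply (φ : K ⟶ L) (i : ι) (x : K.cycles i) :
    homologyMap φ i (K.homologyπ i x) = L.homologyπ i (cyclesMap φ i x) :=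
  ConcreteCategory.congr_hom (homologyπ_naturality φ i) x

lemma exists_cyclesMap_eq (φ : K ⟶ L) (i : ι) (hφ : Function.Injective (φ.f (c.next i)))
    (x : L.cycles i) (y : K.X i) (hy : φ.f i y = L.iCycles i x) :
    ∃ y' : K.cycles i, cyclesMap φ i y' = x := by
  have hdy : K.d i (c.next i) y = 0 := hφ <| by
    rw [← Hom.comm_apply, hy, map_zero]
    exact ConcreteCategory.congr_hom (L.iCycles_d i (c.next i)) x
  obtain ⟨y', hy'⟩ := exists_iCycles_eq y hdy
  exact ⟨y', L.iCycles_injective i (by rw [cyclesMap_i_apply, hy', hy])⟩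

lemma homologyMap_comp_apply {M : HomologicalComplex (ModuleCat.{v} R) c} (φ : K ⟶ L)
    (ψ : L ⟶ M) (i : ι) (x : K.homology i) :
    homologyMap (φ ≫ ψ) i x = homologyMap ψ i (homologyMap φ i x) :=
  ConcreteCategory.congr_hom (homologyMap_comp φ ψ i) x

section DirectedUnion

variable {A : Type*} [Preorder A] {F : A ⥤ HomologicalComplex (ModuleCat.{v} R) c}
  (s : Cocone F)

lemma ι_app_f_map_f_apply {a b : A} (f : a ⟶ b) (i : ι) (x : (F.obj a).X i) :
    (s.ι.app b).f i ((F.map f).f i x) = (s.ι.app a).f i x :=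
  ConcreteCategory.congr_hom (congrArg (fun φ => φ.f i) (s.w f)) x

lemma homologyMap_ι_app_map_apply {a b : A} (f : a ⟶ b) (i : ι) (x : (F.obj a).homology i) :
    homologyMap (s.ι.app b) i (homologyMap (F.map f) i x) = homologyMap (s.ι.app a) i x := by
  rw [← homologyMap_comp_apply, s.w]

lemma exists_homologyMap_ι_app_eq {i : ι}
    (hinj : ∀ a, Function.Injective ((s.ι.app a).f (c.next i)))
    (hcover : ∀ x : s.pt.X i, ∃ a y, (s.ι.app a).f i y = x) (z : s.pt.homology i) :
    ∃ a w, homologyMap (s.ι.app a) i w = z := by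
  obtain ⟨x, rfl⟩ := s.pt.homologyπ_surjective i z
  obtain ⟨a, y, hy⟩ := hcover (s.pt.iCycles i x)
  obtain ⟨y', rfl⟩ := exists_cyclesMap_eq (s.ι.app a) i (hinj a) x y hy
  exact ⟨a, _, homologyMap_homologyπ_apply _ i y'⟩

lemma exists_homologyMap_map_eq_zero [IsDirected A (· ≤ ·)] {i : ι}
    (hinj : ∀ a, Function.Injective ((s.ι.app a).f i))
    (hcover : ∀ x : s.pt.X (c.prev i), ∃ a y, (s.ι.app a).f (c.prev i) y = x)
    {a : A} (u : (F.obj a).homology i) (hu : homologyMap (s.ι.app a) i u = 0) :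
    ∃ b, ∃ hab : a ≤ b, homologyMap (F.map (homOfLE hab)) i u = 0 := by
  obtain ⟨x, rfl⟩ := (F.obj a).homologyπ_surjective i u
  rw [homologyMap_homologyπ_apply, homologyπ_eq_zero_iff] at hu
  obtain ⟨w, hw⟩ := hu
  obtain ⟨b, w', hw'⟩ := hcover w
  obtain ⟨d, had, hbd⟩ := directed_of (· ≤ ·) a b
  refine ⟨d, had, ?_⟩
  rw [homologyMap_homologyπ_apply, homologyπ_eq_zero_iff]
  refine ⟨(F.map (homOfLE hbd)).f _ w', hinj d ?_⟩
  calc (s.ι.app d).f i ((F.obj d).d _ i ((F.map (homOfLE hbd)).f _ w'))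
      = s.pt.d _ i ((s.ι.app d).f _ ((F.map (homOfLE hbd)).f _ w')) :=
        (Hom.comm_apply _ _ _ _).symm
    _ = s.pt.d _ i w := by rw [ι_app_f_map_f_apply, hw']
    _ = s.pt.iCycles i (cyclesMap (s.ι.app a) i x) := hw
    _ = (s.ι.app d).f i ((F.obj d).iCycles i (cyclesMap (F.map (homOfLE had)) i x)) := by
        rw [cyclesMap_i_apply, cyclesMap_i_apply, ι_app_f_map_f_apply]

lemma exists_homologyMap_map_eq_of_homologyMap_ι_app_eq [IsDirected A (· ≤ ·)] {i : ι}
    (hinj : ∀ a, Function.Injective ((s.ι.app a).f i))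
    (hcover : ∀ x : s.pt.X (c.prev i), ∃ a y, (s.ι.app a).f (c.prev i) y = x)
    {a b : A} (x : (F.obj a).homology i) (y : (F.obj b).homology i)
    (hxy : homologyMap (s.ι.app a) i x = homologyMap (s.ι.app b) i y) :
    ∃ d, ∃ had : a ≤ d, ∃ hbd : b ≤ d,
      homologyMap (F.map (homOfLE had)) i x = homologyMap (F.map (homOfLE hbd)) i y := by
  obtain ⟨c₀, hac₀, hbc₀⟩ := directed_of (· ≤ ·) a b
  obtain ⟨d, hc₀d, hd⟩ := exists_homologyMap_map_eq_zero s hinj hcover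
    (homologyMap (F.map (homOfLE hac₀)) i x - homologyMap (F.map (homOfLE hbc₀)) i y)
    (by rw [map_sub, homologyMap_ι_app_map_apply, homologyMap_ι_app_map_apply, hxy, sub_self])
  refine ⟨d, hac₀.trans hc₀d, hbc₀.trans hc₀d, ?_⟩
  rw [map_sub, sub_eq_zero, ← homologyMap_comp_apply, ← homologyMap_comp_apply,
    ← F.map_comp, ← F.map_comp] at hd
  exact hd

end DirectedUnion

end HomologicalComplex

instance (n : SimplexCategory) : CompactSpace (SimplexCategory.toTop₀.obj n) :=
  inferInstanceAs (CompactSpace (stdSimplex ℝ (Fin (n.len + 1))))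

instance (n : SimplexCategory) : CompactSpace (SimplexCategory.toTop.{u}.obj n) :=
  inferInstanceAs (CompactSpace (ULift _))

noncomputable def singularChainsFunctor (R : Type u) [Ring R] :
    TopCat.{u} ⥤ ChainComplex (ModuleCat.{u} R) ℕ :=
  TopCat.toSSet ⋙ ((SimplicialObject.whiskering _ _).obj (ModuleCat.free R)) ⋙
    AlgebraicTopology.alternatingFaceMapComplex _

namespace singularChainsFunctor

variable {R : Type u} [Ring R] {X Y : TopCat.{u}}

lemma map_f_eq_mapDomain (f : X ⟶ Y) (n : ℕ) :
    ⇑(((singularChainsFunctor R).map f).f n) =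
      Finsupp.mapDomain fun σ : ULift.{0} (SimplexCategory.toTop.obj ⦋n⦌ ⟶ X) =>
        (ULift.up (σ.down ≫ f) : ULift.{0} (SimplexCategory.toTop.obj ⦋n⦌ ⟶ Y)) :=
  rfl

lemma map_f_injective {f : X ⟶ Y} (hf : Function.Injective f) (n : ℕ) :
    Function.Injective (((singularChainsFunctor R).map f).f n) := by
  rw [map_f_eq_mapDomain]
  refine Finsupp.mapDomain_injective fun σ σ' h => ULift.ext _ _ <|
    ConcreteCategory.hom_ext _ _ fun t => hf ?_
  exact ConcreteCategory.congr_hom (congrArg ULift.down h) t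

lemma exists_map_f_eq (f : X ⟶ Y) {n : ℕ}
    (x : ULift.{0} (SimplexCategory.toTop.obj ⦋n⦌ ⟶ Y) →₀ R)
    (hx : ∀ σ ∈ x.support, ∃ σ', σ' ≫ f = σ.down) :
    ∃ y, ((singularChainsFunctor R).map f).f n y = x := by
  let g : ULift.{0} (SimplexCategory.toTop.obj ⦋n⦌ ⟶ X) →
      ULift.{0} (SimplexCategory.toTop.obj ⦋n⦌ ⟶ Y) := fun σ => ⟨σ.down ≫ f⟩
  have hx' : x ∈ Finsupp.supported R R (range g) := by
    intro σ hσ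
    obtain ⟨σ', hσ'⟩ := hx σ hσ
    exact ⟨ULift.up σ', ULift.ext _ _ hσ'⟩
  rw [← image_univ, ← Finsupp.lmapDomain_supported, Finsupp.supported_univ] at hx'
  obtain ⟨y, -, hy⟩ := hx'
  exact ⟨y, hy⟩

end singularChainsFunctor

section CompactlyRetractive

variable {M : Type u} [TopologicalSpace M] {A : Type*} (S : A → Set M)
  (τ : ∀ a, TopologicalSpace (S a))

lemma exists_singularChain_lift_to_subspace {R : Type u} [Ring R]
    (hincl : ∀ a, @Continuous _ _ (τ a) _ (fun x : S a => (x : M)))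
    (hcr : ∀ K : Set M, IsCompact K → ∃ a, ∃ hKa : K ⊆ S a,
      (inferInstance : TopologicalSpace K) = TopologicalSpace.induced (Set.inclusion hKa) (τ a))
    {n : ℕ} (x : ULift.{0} (SimplexCategory.toTop.obj ⦋n⦌ ⟶ TopCat.of M) →₀ R) :
    ∃ a y, ((singularChainsFunctor R).map (@TopCat.ofHom _ _ (τ a) _
      (@ContinuousMap.mk _ _ (τ a) _ (fun x : S a => (x : M)) (hincl a)))).f n y = x := by
  obtain ⟨a, hKa, htop⟩ := hcr (⋃ σ ∈ x.support, range σ.down)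
    (x.support.finite_toSet.isCompact_biUnion fun σ _ => isCompact_range σ.down.hom.continuous)
  have hKa_cont : @Continuous _ _ _ (τ a) (Set.inclusion hKa) := by
    rw [continuous_iff_le_induced, ← htop]
  refine ⟨a, singularChainsFunctor.exists_map_f_eq _ x fun σ hσ => ?_⟩
  exact ⟨@TopCat.ofHom _ _ _ (τ a) (@ContinuousMap.mk _ _ _ (τ a)
    (fun t => Set.inclusion hKa ⟨σ.down t, mem_biUnion hσ ⟨t, rfl⟩⟩)
    (hKa_cont.comp (σ.down.hom.continuous.codRestrict _))),
    ConcreteCategory.hom_ext _ _ fun _ => rfl⟩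

def subspaceDiagram [Preorder A] (hmono : Monotone S)
    (hinclab : ∀ a b (hab : a ≤ b), @Continuous _ _ (τ a) (τ b) (Set.inclusion (hmono hab))) :
    A ⥤ TopCat.{u} where
  obj a := @TopCat.of (S a) (τ a)
  map {a b} h := @TopCat.ofHom _ _ (τ a) (τ b)
    (@ContinuousMap.mk _ _ (τ a) (τ b) (Set.inclusion (hmono h.le)) (hinclab a b h.le))

def subspaceCocone [Preorder A] (hmono : Monotone S)
    (hincl : ∀ a, @Continuous _ _ (τ a) _ (fun x : S a => (x : M)))
    (hinclab : ∀ a b (hab : a ≤ b), @Continuous _ _ (τ a) (τ b) (Set.inclusion (hmono hab))) :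
    Cocone (subspaceDiagram S τ hmono hinclab) where
  pt := TopCat.of M
  ι :=
    { app a := @TopCat.ofHom _ _ (τ a) _
        (@ContinuousMap.mk _ _ (τ a) _ (fun x : S a => (x : M)) (hincl a))
      naturality _ _ _ := rfl }

end CompactlyRetractive

theorem singularHomology_of_compactly_retractive_union_general
    {M : Type} [TopologicalSpace M] {A : Type} [Preorder A] [IsDirected A (· ≤ ·)]
    (S : A → Set M) (hmono : Monotone S)
    (τ : ∀ a, TopologicalSpace (S a))
    (hincl : ∀ a, @Continuous _ _ (τ a) _ (fun x : S a => (x : M)))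
    (hinclab : ∀ a b (hab : a ≤ b), @Continuous _ _ (τ a) (τ b) (Set.inclusion (hmono hab)))
    (hcr : ∀ K : Set M, IsCompact K → ∃ a, ∃ hKa : K ⊆ S a,
      (inferInstance : TopologicalSpace K) =
        TopologicalSpace.induced (Set.inclusion hKa) (τ a))
    (R : Type) [CommRing R] (k : ℕ) :
    (∀ z : (singularHomologyFunctor R k).obj (TopCat.of M), ∃ a,
      ∃ w : (singularHomologyFunctor R k).obj (@TopCat.of (S a) (τ a)),
        ((singularHomologyFunctor R k).map
          (X := @TopCat.of (S a) (τ a)) (Y := TopCat.of M)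
          (@TopCat.ofHom _ _ (τ a) _ (@ContinuousMap.mk _ _ (τ a) _ (fun x : S a => (x : M)) (hincl a)))) w = z) ∧
    (∀ a b, ∀ x : (singularHomologyFunctor R k).obj (@TopCat.of (S a) (τ a)),
      ∀ y : (singularHomologyFunctor R k).obj (@TopCat.of (S b) (τ b)),
      ((singularHomologyFunctor R k).map
          (X := @TopCat.of (S a) (τ a)) (Y := TopCat.of M)
          (@TopCat.ofHom _ _ (τ a) _ (@ContinuousMap.mk _ _ (τ a) _ (fun x : S a => (x : M)) (hincl a)))) x =
        ((singularHomologyFunctor R k).map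
          (X := @TopCat.of (S b) (τ b)) (Y := TopCat.of M)
          (@TopCat.ofHom _ _ (τ b) _ (@ContinuousMap.mk _ _ (τ b) _ (fun x : S b => (x : M)) (hincl b)))) y →
      ∃ c, ∃ hac : a ≤ c, ∃ hbc : b ≤ c,
        ((singularHomologyFunctor R k).map
          (X := @TopCat.of (S a) (τ a)) (Y := @TopCat.of (S c) (τ c))
          (@TopCat.ofHom _ _ (τ a) (τ c) (@ContinuousMap.mk _ _ (τ a) (τ c) (Set.inclusion (hmono hac)) (hinclab a c hac)))) x =
          ((singularHomologyFunctor R k).map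
            (X := @TopCat.of (S b) (τ b)) (Y := @TopCat.of (S c) (τ c))
            (@TopCat.ofHom _ _ (τ b) (τ c) (@ContinuousMap.mk _ _ (τ b) (τ c) (Set.inclusion (hmono hbc)) (hinclab b c hbc)))) y) := by
  let s := (singularChainsFunctor R).mapCocone (subspaceCocone S τ hmono hincl hinclab)
  have hinj : ∀ a n, Function.Injective ((s.ι.app a).f n) := fun a =>
    singularChainsFunctor.map_f_injective Subtype.val_injective
  have hcover : ∀ n (x : s.pt.X n), ∃ a y, (s.ι.app a).f n y = x := fun n x =>
    exists_singularChain_lift_to_subspace S τ hincl hcr x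
  -- `(singularHomologyFunctor R k).map f` is `homologyMap ((singularChainsFunctor R).map f) k`.
  exact ⟨HomologicalComplex.exists_homologyMap_ι_app_eq s (fun a => hinj a _) (hcover k),
    fun a b x y => HomologicalComplex.exists_homologyMap_map_eq_of_homologyMap_ι_app_eq s
      (fun a => hinj a k) (hcover _) x y⟩

/-- For a compactly retractive directed union `M = ⋃ α, M_α` of topological
spaces (with continuous inclusion maps), every commutative ring `R` and every
`k ∈ ℕ`, the singular homology module `H_k(M; R)` is the direct limit of the
modules `H_k(M_α; R)` via the inclusion-induced maps: every class comes from a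
step, and classes from steps that agree in `H_k(M; R)` agree in a later step. -/
theorem singularHomology_of_compactly_retractive_union
    {M : Type} [TopologicalSpace M] {A : Type} [Preorder A] [IsDirected A (· ≤ ·)]
    (S : A → Set M) (hmono : Monotone S) (hunion : ⋃ a, S a = univ)
    (τ : ∀ a, TopologicalSpace (S a))
    (hincl : ∀ a, @Continuous _ _ (τ a) _ (fun x : S a => (x : M)))
    (hinclab : ∀ a b (hab : a ≤ b), @Continuous _ _ (τ a) (τ b) (Set.inclusion (hmono hab)))
    (hcr : ∀ K : Set M, IsCompact K → ∃ a, ∃ hKa : K ⊆ S a,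
      (inferInstance : TopologicalSpace K) =
        TopologicalSpace.induced (Set.inclusion hKa) (τ a))
    (R : Type) [CommRing R] (k : ℕ) :
    (∀ z : (singularHomologyFunctor R k).obj (TopCat.of M), ∃ a,
      ∃ w : (singularHomologyFunctor R k).obj (@TopCat.of (S a) (τ a)),
        ((singularHomologyFunctor R k).map
          (X := @TopCat.of (S a) (τ a)) (Y := TopCat.of M)
          (@TopCat.ofHom _ _ (τ a) _ (@ContinuousMap.mk _ _ (τ a) _ (fun x : S a => (x : M)) (hincl a)))) w = z) ∧
    (∀ a b, ∀ x : (singularHomologyFunctor R k).obj (@TopCat.of (S a) (τ a)),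
      ∀ y : (singularHomologyFunctor R k).obj (@TopCat.of (S b) (τ b)),
      ((singularHomologyFunctor R k).map
          (X := @TopCat.of (S a) (τ a)) (Y := TopCat.of M)
          (@TopCat.ofHom _ _ (τ a) _ (@ContinuousMap.mk _ _ (τ a) _ (fun x : S a => (x : M)) (hincl a)))) x =
        ((singularHomologyFunctor R k).map
          (X := @TopCat.of (S b) (τ b)) (Y := TopCat.of M)
          (@TopCat.ofHom _ _ (τ b) _ (@ContinuousMap.mk _ _ (τ b) _ (fun x : S b => (x : M)) (hincl b)))) y →
      ∃ c, ∃ hac : a ≤ c, ∃ hbc : b ≤ c,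
        ((singularHomologyFunctor R k).map
          (X := @TopCat.of (S a) (τ a)) (Y := @TopCat.of (S c) (τ c))
          (@TopCat.ofHom _ _ (τ a) (τ c) (@ContinuousMap.mk _ _ (τ a) (τ c) (Set.inclusion (hmono hac)) (hinclab a c hac)))) x =
          ((singularHomologyFunctor R k).map
            (X := @TopCat.of (S b) (τ b)) (Y := @TopCat.of (S c) (τ c))
            (@TopCat.ofHom _ _ (τ b) (τ c) (@ContinuousMap.mk _ _ (τ b) (τ c) (Set.inclusion (hmono hbc)) (hinclab b c hbc)))) y) :=
  singularHomology_of_compactly_retractive_union_general S hmono τ hincl hinclab hcr R k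
end

section
/- In the setting of the Filling Lemma, the operator Φ : C(∂Δ, E) → C(Δ, E), γ ↦ Φ(γ), is linear and continuous with respect to the compact-open topologies. -/
/-!
Every `x ∈ Δ` can be written as `t • b + ∑ j, s j • v j` with `s ≥ 0` and some `s i = 0`, and
then `t = r * minⱼ λⱼ(x)` for the barycentric coordinates `λ`. Hence `t` is continuous on `Δ`,
and so is the radial projection `y(x) = (1 - t)⁻¹ • ∑ j, s j • v j ∈ ∂Δ` away from the barycentre
`t = 1`. So `Φγ(x) = t • γ(x_Δ) + (1 - t) • γ(y(x))` is continuous away from `b`, and also at `b`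
because `(1 - t) → 0` there while `γ ∘ y` stays in the compact, hence bounded, set `γ(∂Δ)`.
`Φ` is linear, and continuous at `0`: if `γ(∂Δ)` lies in a balanced neighbourhood `W` of `0`,
then `Φγ(Δ) ⊆ W + W`.
-/

open Set Filter Topology Pointwise

section Filling

variable {X B E : Type*} [TopologicalSpace X] [TopologicalSpace B] [AddCommGroup E] [Module ℝ E]

theorem Balanced.smul_add_one_sub_smul_mem_add {W : Set E} (hW : Balanced ℝ W) {a b : E}
    (ha : a ∈ W) (hb : b ∈ W) {τ : ℝ} (hτ : τ ∈ Icc (0 : ℝ) 1) :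
    τ • a + (1 - τ) • b ∈ W + W := by
  have h₁ : ‖τ‖ ≤ 1 := by rw [Real.norm_of_nonneg hτ.1]; exact hτ.2
  have h₂ : ‖1 - τ‖ ≤ 1 := by
    rw [Real.norm_of_nonneg (sub_nonneg.2 hτ.2)]; linarith [hτ.1]
  exact add_mem_add (hW.smul_mem h₁ ha) (hW.smul_mem h₂ hb)

variable [TopologicalSpace E] [IsTopologicalAddGroup E] [ContinuousSMul ℝ E]

theorem Continuous.smul_of_continuousAt_of_mem_isCompact {s : X → ℝ} {u : X → E} {K : Set E}
    (hs : Continuous s) (hu : ∀ x, s x ≠ 0 → ContinuousAt u x) (hK : IsCompact K)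
    (huK : ∀ x, u x ∈ K) : Continuous fun x => s x • u x := by
  refine continuous_iff_continuousAt.2 fun x => ?_
  by_cases hx : s x = 0
  · have hs0 : Tendsto s (𝓝 x) (𝓝 0) := hx ▸ hs.tendsto x
    rw [ContinuousAt, hx, zero_smul]
    exact (hK.isVonNBounded ℝ).smul_tendsto_zero (.of_forall huK) hs0
  · exact hs.continuousAt.smul (hu x hx)

variable (t : X → ℝ) (p : B) (y : X → B)

def convexFill (γ : C(B, E)) (x : X) : E := t x • γ p + (1 - t x) • γ (y x)

variable {t y} [CompactSpace B]

theorem continuous_convexFill (ht : Continuous t) (hy : ∀ x, t x ≠ 1 → ContinuousAt y x)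
    (γ : C(B, E)) : Continuous (convexFill t p y γ) :=
  (ht.smul continuous_const).add <|
    (continuous_const.sub ht).smul_of_continuousAt_of_mem_isCompact
      (fun x hx => γ.continuous.continuousAt.comp (hy x (sub_ne_zero.1 hx).symm))
      (isCompact_range γ.continuous) fun x => mem_range_self (y x)

def fillingOperator (ht : Continuous t) (hy : ∀ x, t x ≠ 1 → ContinuousAt y x) :
    C(B, E) →ₗ[ℝ] C(X, E) where
  toFun γ := ⟨convexFill t p y γ, continuous_convexFill p ht hy γ⟩
  map_add' γ₁ γ₂ := by
    ext x
    simp only [convexFill, ContinuousMap.coe_mk, ContinuousMap.add_apply, smul_add]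
    abel
  map_smul' c γ := by
    ext x
    simp only [convexFill, ContinuousMap.coe_mk, ContinuousMap.smul_apply, smul_add,
      smul_comm _ c, RingHom.id_apply]

theorem fillingOperator_apply (ht : Continuous t) (hy : ∀ x, t x ≠ 1 → ContinuousAt y x)
    (γ : C(B, E)) (x : X) :
    fillingOperator p ht hy γ x = t x • γ p + (1 - t x) • γ (y x) :=
  rfl

theorem continuous_fillingOperator (ht : Continuous t) (hy : ∀ x, t x ≠ 1 → ContinuousAt y x)
    (ht₀₁ : ∀ x, t x ∈ Icc (0 : ℝ) 1) :
    Continuous (fillingOperator (E := E) p ht hy) := by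
  refine continuous_of_continuousAt_zero (fillingOperator p ht hy).toAddMonoidHom ?_
  rw [ContinuousAt, map_zero, ContinuousMap.tendsto_nhds_compactOpen]
  intro K _ U hU hKU
  rcases K.eq_empty_or_nonempty with rfl | ⟨x₀, hx₀⟩
  · exact .of_forall fun _ => mapsTo_empty _ _
  obtain ⟨V, hV, hVU⟩ := exists_nhds_zero_half (hU.mem_nhds (by simpa using hKU hx₀))
  obtain ⟨W, ⟨hW, hWbal⟩, hWV⟩ := (nhds_basis_balanced ℝ E).mem_iff.mp hV
  obtain ⟨W', hW'W, hW'open, hW'0⟩ := mem_nhds_iff.mp hW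
  have hsmall : {γ : C(B, E) | MapsTo γ univ W'} ∈ 𝓝 0 :=
    (ContinuousMap.isOpen_setOfPred_mapsTo isCompact_univ hW'open).mem_nhds
      fun _ _ => hW'0
  filter_upwards [hsmall] with γ hγ x _
  obtain ⟨a, ha, b, hb, hab⟩ := Balanced.smul_add_one_sub_smul_mem_add hWbal
    (hW'W (hγ (mem_univ p))) (hW'W (hγ (mem_univ (y x)))) (ht₀₁ x)
  change fillingOperator p ht hy γ x ∈ U
  rw [fillingOperator_apply, ← hab]
  exact hVU a (hWV ha) b (hWV hb)

end Filling

section MinCoord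

variable {ι F : Type*} [Fintype ι] [Nonempty ι] (lam : ι → F → ℝ)

noncomputable def minCoord (x : F) : ℝ := Finset.univ.inf' Finset.univ_nonempty fun j => lam j x

noncomputable def centreWeight (x : F) : ℝ := Fintype.card ι * minCoord lam x

variable {lam} [TopologicalSpace F]

theorem continuous_minCoord (hcont : ∀ j, Continuous (lam j)) : Continuous (minCoord lam) :=
  Continuous.finset_inf'_apply _ fun j _ => hcont j

theorem continuous_centreWeight (hcont : ∀ j, Continuous (lam j)) :
    Continuous (centreWeight lam) :=
  continuous_const.mul (continuous_minCoord hcont)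

end MinCoord

section Simplex

variable {ι F : Type*} [Fintype ι] [AddCommGroup F] [Module ℝ F] {v : ι → F}

def IsBarycentricCoords (v : ι → F) (lam : ι → F → ℝ) : Prop :=
  ∀ c : ι → ℝ, ∑ i, c i = 1 → ∀ j, lam j (∑ i, c i • v i) = c j

theorem exists_weights_of_mem_convexHull_range {x : F} (hx : x ∈ convexHull ℝ (range v)) :
    ∃ c : ι → ℝ, (∀ j, 0 ≤ c j) ∧ ∑ j, c j = 1 ∧ x = ∑ j, c j • v j := by
  classical
  rw [convexHull_range_eq_exists_affineCombination] at hx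
  obtain ⟨s, w, hw₀, hw₁, rfl⟩ := hx
  have hc₁ : ∑ j, (s : Set ι).indicator w j = 1 := by
    rw [Finset.sum_indicator_subset w s.subset_univ, hw₁]
  refine ⟨(s : Set ι).indicator w, indicator_nonneg fun i hi => hw₀ i hi, hc₁, ?_⟩
  rw [← Finset.univ.affineCombination_eq_linear_combination v _ hc₁,
    Finset.affineCombination_indicator_subset w v s.subset_univ]

theorem inv_sum_smul_sum_mem_convexHull {s : ι → ℝ} (hs : ∀ j, 0 ≤ s j) {i : ι}
    (hi : s i = 0) (hpos : 0 < ∑ j, s j) :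
    (∑ j, s j)⁻¹ • ∑ j, s j • v j ∈ convexHull ℝ (v '' {j | j ≠ i}) := by
  classical
  change Finset.univ.centerMass s v ∈ _
  rw [← Finset.centerMass_subset v (Finset.univ.erase_subset i)
    fun j _ hj => by
      rwa [of_not_not (mt (Finset.mem_erase_of_ne_of_mem · (Finset.mem_univ j)) hj)]]
  refine Finset.centerMass_mem_convexHull _ (fun j _ => hs j) ?_ fun j hj =>
    mem_image_of_mem v (Finset.ne_of_mem_erase hj)
  rwa [Finset.sum_erase _ hi]

theorem AffineIndependent.exists_isBarycentricCoords_continuous [TopologicalSpace F]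
    [IsTopologicalAddGroup F] [ContinuousSMul ℝ F] [T2Space F] [FiniteDimensional ℝ F]
    (hv : AffineIndependent ℝ v) :
    ∃ lam : ι → F → ℝ, IsBarycentricCoords v lam ∧ ∀ j, Continuous (lam j) := by
  classical
  obtain ⟨T, hvT, hT, hTspan⟩ := exists_subset_affineIndependent_affineSpan_eq_top hv.range
  let C : AffineBasis T ℝ F := ⟨(↑), hT, by rwa [Subtype.range_coe]⟩
  let e : ι → T := fun j => ⟨v j, hvT (mem_range_self j)⟩
  have he : Function.Injective e := fun i j h => hv.injective (congrArg Subtype.val h)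
  refine ⟨fun j => C.coord (e j), fun c hc j => ?_, fun j =>
    AffineMap.continuous_linear_iff.1 (C.coord (e j)).linear.continuous_of_finiteDimensional⟩
  have hCe : ⇑C ∘ e = v := rfl
  change C.coord (e j) _ = c j
  rw [← Finset.univ.affineCombination_eq_linear_combination v c hc, ← hCe,
    Finset.univ.map_affineCombination _ _ hc,
    Finset.univ.affineCombination_eq_linear_combination _ _ hc]
  simp [C.coord_apply, he.eq_iff]

noncomputable def barycentre (v : ι → F) : F := (Fintype.card ι : ℝ)⁻¹ • ∑ j, v j

theorem exists_eq_smul_barycentre_add [Nonempty ι] {x : F} (hx : x ∈ convexHull ℝ (range v)) :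
    ∃ (t : ℝ) (s : ι → ℝ), 0 ≤ t ∧ (∀ j, 0 ≤ s j) ∧ (∃ i, s i = 0) ∧
      t + ∑ j, s j = 1 ∧ x = t • barycentre v + ∑ j, s j • v j := by
  obtain ⟨c, hc₀, hc₁, rfl⟩ := exists_weights_of_mem_convexHull_range hx
  obtain ⟨i, -, hi⟩ := Finset.exists_mem_eq_inf' Finset.univ_nonempty c
  set μ := Finset.univ.inf' Finset.univ_nonempty c
  have hcard : (Fintype.card ι : ℝ) ≠ 0 := Nat.cast_ne_zero.2 Fintype.card_ne_zero
  refine ⟨Fintype.card ι * μ, fun j => c j - μ,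
    mul_nonneg (Nat.cast_nonneg _) (hi ▸ hc₀ i),
    fun j => sub_nonneg.2 (Finset.inf'_le _ (Finset.mem_univ j)), ⟨i, sub_eq_zero.2 hi.symm⟩,
    ?_, ?_⟩
  · simp [Finset.sum_sub_distrib, hc₁]
  · rw [barycentre, smul_smul, mul_comm _ μ, mul_inv_cancel_right₀ hcard, Finset.smul_sum,
      ← Finset.sum_add_distrib]
    simp only [sub_smul, add_sub_cancel]

variable [Nonempty ι] (lam : ι → F → ℝ)

noncomputable def radialProj (v : ι → F) (x : F) : F :=
  (1 - centreWeight lam x)⁻¹ • ∑ j, (lam j x - minCoord lam x) • v j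

variable {lam}

theorem coord_eq_of_eq_smul_barycentre_add
    (hlam : IsBarycentricCoords v lam)
    {x : F} {t : ℝ} {s : ι → ℝ} (hts : t + ∑ j, s j = 1)
    (hx : x = t • barycentre v + ∑ j, s j • v j) (j : ι) :
    lam j x = t / Fintype.card ι + s j := by
  have hcard : (Fintype.card ι : ℝ) ≠ 0 := Nat.cast_ne_zero.2 Fintype.card_ne_zero
  have hc : ∑ j, (t / Fintype.card ι + s j) = 1 := by
    simp [Finset.sum_add_distrib, Finset.card_univ, mul_div_cancel₀ _ hcard, hts]
  have hx' : x = ∑ j, (t / Fintype.card ι + s j) • v j := by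
    rw [hx, barycentre, smul_smul, Finset.smul_sum, ← Finset.sum_add_distrib]
    simp only [add_smul, div_eq_mul_inv]
  exact hx' ▸ hlam _ hc j

theorem minCoord_eq_of_eq_smul_barycentre_add
    (hlam : IsBarycentricCoords v lam)
    {x : F} {t : ℝ} {s : ι → ℝ} (hs : ∀ j, 0 ≤ s j) (hs₀ : ∃ i, s i = 0)
    (hts : t + ∑ j, s j = 1) (hx : x = t • barycentre v + ∑ j, s j • v j) :
    minCoord lam x = t / Fintype.card ι := by
  have hcoord := coord_eq_of_eq_smul_barycentre_add hlam hts hx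
  obtain ⟨i, hi⟩ := hs₀
  refine le_antisymm ?_ (Finset.le_inf' _ _ fun j _ => ?_)
  · exact (Finset.inf'_le _ (Finset.mem_univ i)).trans_eq (by rw [hcoord, hi, add_zero])
  · rw [hcoord]; linarith [hs j]

theorem centreWeight_eq_of_eq_smul_barycentre_add
    (hlam : IsBarycentricCoords v lam)
    {x : F} {t : ℝ} {s : ι → ℝ} (hs : ∀ j, 0 ≤ s j) (hs₀ : ∃ i, s i = 0)
    (hts : t + ∑ j, s j = 1) (hx : x = t • barycentre v + ∑ j, s j • v j) :
    centreWeight lam x = t := by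
  have hcard : (Fintype.card ι : ℝ) ≠ 0 := Nat.cast_ne_zero.2 Fintype.card_ne_zero
  rw [centreWeight, minCoord_eq_of_eq_smul_barycentre_add hlam hs hs₀ hts hx,
    mul_div_cancel₀ _ hcard]

theorem radialProj_eq_of_eq_smul_barycentre_add
    (hlam : IsBarycentricCoords v lam)
    {x : F} {t : ℝ} {s : ι → ℝ} (hs : ∀ j, 0 ≤ s j) (hs₀ : ∃ i, s i = 0)
    (hts : t + ∑ j, s j = 1) (hx : x = t • barycentre v + ∑ j, s j • v j) :
    radialProj lam v x = (1 - t)⁻¹ • ∑ j, s j • v j := by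
  simp only [radialProj, centreWeight_eq_of_eq_smul_barycentre_add hlam hs hs₀ hts hx,
    minCoord_eq_of_eq_smul_barycentre_add hlam hs hs₀ hts hx,
    coord_eq_of_eq_smul_barycentre_add hlam hts hx, add_sub_cancel_left]

theorem centreWeight_mem_Icc
    (hlam : IsBarycentricCoords v lam)
    {x : F} (hx : x ∈ convexHull ℝ (range v)) : centreWeight lam x ∈ Icc (0 : ℝ) 1 := by
  obtain ⟨t, s, ht, hs, hs₀, hts, rfl⟩ := exists_eq_smul_barycentre_add hx
  rw [centreWeight_eq_of_eq_smul_barycentre_add hlam hs hs₀ hts rfl]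
  exact ⟨ht, by linarith [Finset.sum_nonneg fun j (_ : j ∈ Finset.univ) => hs j]⟩

theorem radialProj_mem_boundary
    (hlam : IsBarycentricCoords v lam)
    {x : F} (hx : x ∈ convexHull ℝ (range v)) (hx₁ : centreWeight lam x < 1) :
    radialProj lam v x ∈ ⋃ i, convexHull ℝ (v '' {j | j ≠ i}) := by
  obtain ⟨t, s, -, hs, ⟨i, hi⟩, hts, rfl⟩ := exists_eq_smul_barycentre_add hx
  rw [centreWeight_eq_of_eq_smul_barycentre_add hlam hs ⟨i, hi⟩ hts rfl] at hx₁
  rw [radialProj_eq_of_eq_smul_barycentre_add hlam hs ⟨i, hi⟩ hts rfl,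
    ← eq_sub_of_add_eq' hts]
  exact mem_iUnion_of_mem i (inv_sum_smul_sum_mem_convexHull hs hi (by linarith))

theorem continuousAt_radialProj [TopologicalSpace F] [ContinuousAdd F] [ContinuousSMul ℝ F]
    (hcont : ∀ j, Continuous (lam j)) {x : F} (hx : centreWeight lam x ≠ 1) :
    ContinuousAt (radialProj lam v) x := by
  refine ((continuous_const.sub (continuous_centreWeight hcont)).continuousAt.inv₀
    (sub_ne_zero.2 hx.symm)).smul ?_
  exact (continuous_finsetSum _ fun j _ =>
    ((hcont j).sub (continuous_minCoord hcont)).smul continuous_const).continuousAt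

variable (p : ⋃ i, convexHull ℝ (v '' {j | j ≠ i}))

noncomputable def boundaryProj (hlam : IsBarycentricCoords v lam) (x : convexHull ℝ (range v)) :
    ⋃ i, convexHull ℝ (v '' {j | j ≠ i}) :=
  if hx : centreWeight lam x < 1 then ⟨radialProj lam v x, radialProj_mem_boundary hlam x.2 hx⟩
  else p

variable {p} in
theorem coe_boundaryProj_of_lt (hlam : IsBarycentricCoords v lam) {x : convexHull ℝ (range v)}
    (hx : centreWeight lam x < 1) : (boundaryProj p hlam x : F) = radialProj lam v x := by
  simp [boundaryProj, hx]

theorem boundaryProj_of_not_lt (hlam : IsBarycentricCoords v lam) {x : convexHull ℝ (range v)}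
    (hx : ¬centreWeight lam x < 1) : boundaryProj p hlam x = p :=
  dif_neg hx

theorem continuousAt_boundaryProj [TopologicalSpace F] [ContinuousAdd F] [ContinuousSMul ℝ F]
    (hlam : IsBarycentricCoords v lam) (hcont : ∀ j, Continuous (lam j))
    {x : convexHull ℝ (range v)} (hx : centreWeight lam x ≠ 1) :
    ContinuousAt (boundaryProj p hlam) x := by
  have hx₁ : centreWeight lam x < 1 := lt_of_le_of_ne (centreWeight_mem_Icc hlam x.2).2 hx
  rw [IsInducing.subtypeVal.continuousAt_iff]
  refine ((continuousAt_radialProj (v := v) hcont hx).comp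
    continuous_subtype_val.continuousAt).congr ?_
  filter_upwards [(isOpen_lt ((continuous_centreWeight hcont).comp continuous_subtype_val)
    continuous_const).mem_nhds hx₁] with z hz
  exact (coe_boundaryProj_of_lt hlam hz).symm

end Simplex

/-- **Filling Lemma, part (b).** In the setting of the Filling Lemma, the filling
operator `Φ : C(∂Δ, E) → C(Δ, E)` (determined by the formula
`Φγ(t·b + Σ t_j v_j) = t·γ(x_Δ) + (1−t)·γ((Σ t_j v_j)/(1−t))` for `t < 1` and
`Φγ(b) = γ(x_Δ)`) exists, is linear, and is continuous for the compact-open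
topologies. -/
theorem filling_operator_linear_continuous
    {F : Type*} [NormedAddCommGroup F] [NormedSpace ℝ F] [FiniteDimensional ℝ F]
    {E : Type*} [AddCommGroup E] [Module ℝ E] [TopologicalSpace E]
    [IsTopologicalAddGroup E] [ContinuousSMul ℝ E]
    (r : ℕ) (hr : 1 ≤ r) (v : Fin r → F) (hv : AffineIndependent ℝ v)
    (Δ : Set F) (hΔ : Δ = convexHull ℝ (Set.range v))
    (b : F) (hb : b = (r : ℝ)⁻¹ • ∑ j, v j)
    (B : Set F) (hB : B = ⋃ i, convexHull ℝ (v '' {j | j ≠ i}))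
    (xΔ : F) (hxΔ : xΔ ∈ B) :
    ∃ Φ : C(B, E) → C(Δ, E), IsLinearMap ℝ Φ ∧ Continuous Φ ∧
      (∀ (γ : C(B, E)) (x : Δ) (t : ℝ) (s : Fin r → ℝ), 0 ≤ t → (∀ j, 0 ≤ s j) →
        (∃ i, s i = 0) → t + ∑ j, s j = 1 → t < 1 →
        (x : F) = t • b + ∑ j, s j • v j →
        ∀ hz : (1 - t)⁻¹ • ∑ j, s j • v j ∈ B,
          Φ γ x = t • γ ⟨xΔ, hxΔ⟩ + (1 - t) • γ ⟨(1 - t)⁻¹ • ∑ j, s j • v j, hz⟩) ∧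
      (∀ (γ : C(B, E)) (hbΔ : b ∈ Δ), Φ γ ⟨b, hbΔ⟩ = γ ⟨xΔ, hxΔ⟩) := by
  have : Nonempty (Fin r) := Fin.pos_iff_nonempty.mp hr
  obtain ⟨lam, hlam, hcont⟩ := hv.exists_isBarycentricCoords_continuous
  replace hb : b = barycentre v := by rw [hb, barycentre, Fintype.card_fin]
  subst hΔ hB
  have : CompactSpace (⋃ i, convexHull ℝ (v '' {j | j ≠ i})) :=
    isCompact_iff_compactSpace.mp <|
      isCompact_iUnion fun i => (toFinite _).isCompact_convexHull (𝕜 := ℝ)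
  have ht : Continuous (centreWeight lam ∘ Subtype.val : convexHull ℝ (range v) → ℝ) :=
    (continuous_centreWeight hcont).comp continuous_subtype_val
  have hy (x : convexHull ℝ (range v)) (hx : centreWeight lam x ≠ 1) :
      ContinuousAt (boundaryProj ⟨xΔ, hxΔ⟩ hlam) x :=
    continuousAt_boundaryProj _ hlam hcont hx
  refine ⟨fillingOperator ⟨xΔ, hxΔ⟩ ht hy, (fillingOperator _ ht hy).isLinear,
    continuous_fillingOperator _ ht hy fun x => centreWeight_mem_Icc hlam x.2, ?_, ?_⟩
  · intro γ x τ s _ hs hs₀ hτs hτ hx hz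
    rw [hb] at hx
    have hxτ : centreWeight lam x = τ :=
      centreWeight_eq_of_eq_smul_barycentre_add hlam hs hs₀ hτs hx
    have hyx : boundaryProj ⟨xΔ, hxΔ⟩ hlam x = ⟨_, hz⟩ :=
      Subtype.ext <| (coe_boundaryProj_of_lt hlam (hxτ ▸ hτ)).trans
        (radialProj_eq_of_eq_smul_barycentre_add hlam hs hs₀ hτs hx)
    rw [fillingOperator_apply, Function.comp_apply, hyx, hxτ]
  · intro γ hbΔ
    have hb₁ : centreWeight lam b = 1 :=
      centreWeight_eq_of_eq_smul_barycentre_add hlam (s := 0) (fun _ => le_rfl)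
        ⟨Classical.arbitrary _, rfl⟩ (by simp) (by simp [hb])
    rw [fillingOperator_apply, Function.comp_apply, boundaryProj_of_not_lt _ hlam hb₁.not_lt,
      hb₁, sub_self, zero_smul, one_smul, add_zero]
end
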